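/- Let D ⊂ ℝⁿ be convex and f : D → ℝ continuous. Suppose there are two balls B⁺, B⁻ ⊂ D, both of radius r > 0, such that f > 0 on B⁺ and f < 0 on B⁻. Then the (n−1)-dimensional Hausdorff measure of the zero set {f = 0} is at least c(n)·r^{n−1} for some dimensional constant c(n) > 0. -/

import Mathlib

open Metric MeasureTheory Set Real

noncomputable section

/-- The space ℝⁿ. -/
abbrev Euc (n : ℕ) := EuclideanSpace ℝ (Fin n)

/-- `u` is harmonic on `s`: twice differentiable with vanishing Laplacian. -/
def IsHarmonicOn {n : ℕ} (u : Euc n → ℝ) (s : Set (Euc n)) : Prop :=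
  ContDiffOn ℝ 2 u s ∧ ∀ x ∈ s,
    (∑ i : Fin n, fderiv ℝ (fun y => fderiv ℝ u y (EuclideanSpace.single i 1)) x
      (EuclideanSpace.single i 1)) = 0

/-- Supremum of `|u|` over the ball `B(c,r)`. -/
def supAbs {n : ℕ} (u : Euc n → ℝ) (c : Euc n) (r : ℝ) : ℝ :=
  ⨆ x : Metric.ball c r, |u x|

/-- Supremum of `u` over the ball `B(c,r)`. -/
def supBall {n : ℕ} (u : Euc n → ℝ) (c : Euc n) (r : ℝ) : ℝ :=
  ⨆ x : Metric.ball c r, u x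

/-- The doubling index of `u` on the ball `B(c,r)`. -/
def doublingIndex {n : ℕ} (u : Euc n → ℝ) (c : Euc n) (r : ℝ) : ℝ :=
  Real.logb 2 (supAbs u c (2 * r) / supAbs u c r)

/-- `H(r)`: the integral of `u²` over the sphere `∂B(c,r)` w.r.t. the
`(n-1)`-dimensional Hausdorff (surface) measure. -/
def sphereL2 {n : ℕ} (u : Euc n → ℝ) (c : Euc n) (r : ℝ) : ℝ :=
  ∫ x in Metric.sphere c r, (u x) ^ 2 ∂(μH[(n : ℝ) - 1])

/-- `G(r)`: the Dirichlet energy of `u` on the ball `B(c,r)`. -/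
def dirichlet {n : ℕ} (u : Euc n → ℝ) (c : Euc n) (r : ℝ) : ℝ :=
  ∫ x in Metric.ball c r, ‖gradient u x‖ ^ 2

/-- Almgren's frequency function `β(r) = r G(r) / H(r)`. -/
def frequency {n : ℕ} (u : Euc n → ℝ) (c : Euc n) (r : ℝ) : ℝ :=
  r * dirichlet u c r / sphereL2 u c r

end

open scoped ENNReal NNReal Pointwise

open Module in
private lemma key (m : ℕ) :
    ∃ c : ℝ, 0 < c ∧ ∀ (D : Set (Euc (m+1))) (f : Euc (m+1) → ℝ) (r : ℝ) (p q : Euc (m+1)),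
      Convex ℝ D → ContinuousOn f D → 0 < r →
      Metric.ball p r ⊆ D → Metric.ball q r ⊆ D →
      (∀ x ∈ Metric.ball p r, 0 < f x) →
      (∀ x ∈ Metric.ball q r, f x < 0) →
      ENNReal.ofReal (c * r ^ (m : ℝ)) ≤ μH[(m : ℝ)] {x ∈ D | f x = 0} := by
  have hcast : ((finrank ℝ (Euc m) : ℕ) : ℝ) = (m : ℝ) := by
    simp [finrank_euclideanSpace_fin]
  have hpos : 0 < μH[(m:ℝ)] (Metric.ball (0 : Euc m) 1) := by
    rw [← hcast]; exact measure_ball_pos _ _ one_pos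
  have hfin : μH[(m:ℝ)] (Metric.ball (0 : Euc m) 1) < ⊤ := by
    rw [← hcast]; exact measure_ball_lt_top
  refine ⟨(μH[(m:ℝ)] (Metric.ball (0 : Euc m) 1)).toReal,
    ENNReal.toReal_pos hpos.ne' hfin.ne, ?_⟩
  intro D f r p q hD hf hr hpD hqD hfp hfq
  have hpq : p ≠ q := by
    rintro rfl
    exact absurd (hfp p (mem_ball_self hr)) (not_lt.2 (hfq p (mem_ball_self hr)).le)
  have hqp : q - p ≠ 0 := sub_ne_zero.2 (Ne.symm hpq)
  set K : Submodule ℝ (Euc (m+1)) := (ℝ ∙ (q - p))ᗮ with hK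
  have hrank : finrank ℝ K = m := by
    have h1 := Submodule.finrank_add_finrank_orthogonal (ℝ ∙ (q - p))
    rw [finrank_span_singleton hqp, finrank_euclideanSpace_fin, ← hK] at h1
    omega
  let b : OrthonormalBasis (Fin m) ℝ K := (stdOrthonormalBasis ℝ K).reindex (finCongr hrank)
  let E : K ≃ₗᵢ[ℝ] Euc m := b.repr
  set pr : Euc (m+1) → Euc m := fun x => E (K.orthogonalProjectionOnto (x - p)) with hpr
  have hlip : LipschitzWith 1 pr := by
    refine LipschitzWith.of_dist_le_mul fun x y => ?_
    have h1 : dist (pr x) (pr y)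
        = dist (K.orthogonalProjectionOnto (x - p)) (K.orthogonalProjectionOnto (y - p)) :=
      E.dist_map _ _
    rw [h1, dist_eq_norm, ← map_sub, dist_eq_norm]
    have h2 : (x - p) - (y - p) = x - y := by abel
    rw [h2, NNReal.coe_one, one_mul]
    calc ‖K.orthogonalProjectionOnto (x - y)‖
        ≤ ‖K.orthogonalProjectionOnto‖ * ‖x - y‖ := (K.orthogonalProjectionOnto).le_opNorm _
      _ ≤ 1 * ‖x - y‖ := by
          gcongr; exact Submodule.orthogonalProjectionOnto_norm_le K
      _ = ‖x - y‖ := one_mul _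
  have hsub : Metric.ball (0 : Euc m) r ⊆ pr '' {x ∈ D | f x = 0} := by
    intro v hv
    rw [mem_ball_zero_iff] at hv
    set w : Euc (m+1) := (E.symm v : Euc (m+1)) with hw
    have hwn : ‖w‖ = ‖v‖ := by
      rw [hw, Submodule.norm_coe, E.symm.norm_map]
    have ha : p + w ∈ Metric.ball p r := by
      rw [mem_ball_iff_norm]
      simpa [hwn] using hv
    have hb : q + w ∈ Metric.ball q r := by
      rw [mem_ball_iff_norm]
      simpa [hwn] using hv
    set g : ℝ → Euc (m+1) := fun t => p + w + t • (q - p) with hg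
    have hseg : ∀ t ∈ Icc (0:ℝ) 1, g t ∈ D := by
      intro t ht
      have hmem : g t ∈ segment ℝ (p + w) (q + w) := by
        rw [segment_eq_image']
        exact ⟨t, ht, by rw [hg]; dsimp only; abel_nf⟩
      exact hD.segment_subset (hpD ha) (hqD hb) hmem
    have hcont : ContinuousOn (f ∘ g) (Icc 0 1) :=
      hf.comp (Continuous.continuousOn (by fun_prop)) hseg
    have hg0 : g 0 = p + w := by simp [hg]
    have hg1 : g 1 = q + w := by rw [hg]; dsimp only; rw [one_smul]; abel
    have h0 : (0:ℝ) ∈ Icc ((f ∘ g) 1) ((f ∘ g) 0) := by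
      constructor
      · simp only [Function.comp_apply, hg1]
        exact (hfq _ hb).le
      · simp only [Function.comp_apply, hg0]
        exact (hfp _ ha).le
    obtain ⟨t, ht, hft⟩ := intermediate_value_Icc' zero_le_one hcont h0
    refine ⟨g t, ⟨hseg t ht, hft⟩, ?_⟩
    have hdiff : g t - p = w + t • (q - p) := by rw [hg]; dsimp only; abel
    have hqpK : q - p ∈ Kᗮ := by
      rw [hK, Submodule.orthogonal_orthogonal]
      exact Submodule.mem_span_singleton_self _
    have hproj : K.orthogonalProjectionOnto (g t - p) = E.symm v := by
      rw [hdiff, map_add, _root_.map_smul,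
        Submodule.orthogonalProjectionOnto_apply_of_mem_orthogonal hqpK, smul_zero, add_zero,
        hw, Submodule.orthogonalProjectionOnto_mem_subspace_eq_self]
    rw [hpr]
    dsimp only
    rw [hproj, E.apply_symm_apply]
  calc ENNReal.ofReal ((μH[(m:ℝ)] (Metric.ball (0 : Euc m) 1)).toReal * r ^ (m : ℝ))
      = μH[(m:ℝ)] (Metric.ball (0 : Euc m) 1) * ENNReal.ofReal (r ^ (m:ℝ)) := by
        rw [ENNReal.ofReal_mul ENNReal.toReal_nonneg, ENNReal.ofReal_toReal hfin.ne]
    _ = μH[(m:ℝ)] (Metric.ball (0 : Euc m) r) := by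
        rw [← smul_unitBall_of_pos hr, Measure.hausdorffMeasure_smul₀ (by positivity) hr.ne']
        rw [ENNReal.smul_def, smul_eq_mul, mul_comm]
        congr 1
        rw [ENNReal.coe_rpow_of_nonneg _ (by positivity), ← enorm_eq_nnnorm, Real.enorm_eq_ofReal hr.le,
          ENNReal.ofReal_rpow_of_pos hr]
    _ ≤ μH[(m:ℝ)] (pr '' {x ∈ D | f x = 0}) := measure_mono hsub
    _ ≤ (1:ℝ≥0) ^ (m:ℝ) * μH[(m:ℝ)] {x ∈ D | f x = 0} :=
        hlip.hausdorffMeasure_image_le (by positivity) _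
    _ = μH[(m:ℝ)] {x ∈ D | f x = 0} := by
        simp

/-- If a continuous function on a convex set is positive on one ball of radius `r` and
negative on another, its zero set has `(n-1)`-Hausdorff measure at least `c(n) r^{n-1}`. -/
theorem stmt1 (n : ℕ) :
    ∃ c : ℝ, 0 < c ∧ ∀ (D : Set (Euc n)) (f : Euc n → ℝ) (r : ℝ) (p q : Euc n),
      Convex ℝ D → ContinuousOn f D → 0 < r →
      Metric.ball p r ⊆ D → Metric.ball q r ⊆ D →
      (∀ x ∈ Metric.ball p r, 0 < f x) →
      (∀ x ∈ Metric.ball q r, f x < 0) →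
      ENNReal.ofReal (c * r ^ ((n : ℝ) - 1)) ≤ μH[(n : ℝ) - 1] {x ∈ D | f x = 0} := by
  cases n with
  | zero =>
    refine ⟨1, one_pos, ?_⟩
    intro D f r p q hD hf hr hpD hqD hfp hfq
    obtain rfl : p = q := Subsingleton.elim p q
    linarith [hfp p (Metric.mem_ball_self hr), hfq p (Metric.mem_ball_self hr)]
  | succ m =>
    obtain ⟨c, hc, h⟩ := key m
    refine ⟨c, hc, ?_⟩
    intro D f r p q hD hf hr hpD hqD hfp hfq
    have hcast : ((m + 1 : ℕ) : ℝ) - 1 = (m : ℝ) := by push_cast; ring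
    rw [hcast]
    exact h D f r p q hD hf hr hpD hqD hfp hfq
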